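/- Let W ⊆ {(r,s) ∈ ℝ² : r > 0} be open, let ψ : W → (0,∞) be smooth with ψ − s ψ_s + (r² − s²) ψ_ss ≠ 0 on W, and let k₁ ∈ ℝ. Define Q = (r ψ_ss + s ψ_rs − ψ_r)/(2r(ψ − s ψ_s + (r² − s²) ψ_ss)) and P = (s ψ_r + r ψ_s)/(2rψ) − ((sψ + (r² − s²)ψ_s)/ψ)·Q on W. If ψ satisfies (1/r)·ψ_r = k₁ ψ ψ_s and ψ_s = k₁(ψ² − s ψ ψ_s) at every point of W, then Q = 0 and P = (k₁/2)·ψ at every point of W. -/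

import Mathlib

/-- Partial derivative in the first variable `r` of a function on `ℝ × ℝ`. -/
noncomputable def pdr (f : ℝ × ℝ → ℝ) (p : ℝ × ℝ) : ℝ := fderiv ℝ f p (1, 0)

/-- Partial derivative in the second variable `s` of a function on `ℝ × ℝ`. -/
noncomputable def pds (f : ℝ × ℝ → ℝ) (p : ℝ × ℝ) : ℝ := fderiv ℝ f p (0, 1)

/-- `Q = (r ψ_ss + s ψ_rs − ψ_r)/(2r(ψ − s ψ_s + (r² − s²) ψ_ss))`. -/
noncomputable def QOf (ψ : ℝ × ℝ → ℝ) (p : ℝ × ℝ) : ℝ :=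
  (p.1 * pds (pds ψ) p + p.2 * pds (pdr ψ) p - pdr ψ p) /
    (2 * p.1 * (ψ p - p.2 * pds ψ p + (p.1 ^ 2 - p.2 ^ 2) * pds (pds ψ) p))

/-- `P = (s ψ_r + r ψ_s)/(2rψ) − ((sψ + (r² − s²)ψ_s)/ψ) Q`. -/
noncomputable def POf (ψ : ℝ × ℝ → ℝ) (p : ℝ × ℝ) : ℝ :=
  (p.2 * pdr ψ p + p.1 * pds ψ p) / (2 * p.1 * ψ p) -
    ((p.2 * ψ p + (p.1 ^ 2 - p.2 ^ 2) * pds ψ p) / ψ p) * QOf ψ p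

/-- if `ψ` satisfies the projective+dual flatness equations
`(1/r) ψ_r = k₁ ψ ψ_s` and `ψ_s = k₁(ψ² − s ψ ψ_s)` on `W`, then the spray
coefficients satisfy `Q = 0` and `P = (k₁/2) ψ` on `W`. -/
theorem spray_coeffs_of_flat (W : Set (ℝ × ℝ)) (hWopen : IsOpen W)
    (hWsub : W ⊆ {p : ℝ × ℝ | 0 < p.1})
    (ψ : ℝ × ℝ → ℝ) (hψ : ContDiffOn ℝ (⊤ : ℕ∞) ψ W) (hψpos : ∀ p ∈ W, 0 < ψ p)
    (hden : ∀ p ∈ W, ψ p - p.2 * pds ψ p + (p.1 ^ 2 - p.2 ^ 2) * pds (pds ψ) p ≠ 0)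
    (k₁ : ℝ)
    (hflat1 : ∀ p ∈ W, (1 / p.1) * pdr ψ p = k₁ * ψ p * pds ψ p)
    (hflat2 : ∀ p ∈ W, pds ψ p = k₁ * ((ψ p) ^ 2 - p.2 * ψ p * pds ψ p)) :
    ∀ p ∈ W, QOf ψ p = 0 ∧ POf ψ p = (k₁ / 2) * ψ p := by
  intro p hp
  have hpW : W ∈ nhds p := hWopen.mem_nhds hp
  have hr0 : (0:ℝ) < p.1 := hWsub hp
  have ha0 : ψ p ≠ 0 := ne_of_gt (hψpos p hp)
  -- smoothness of the derivative function
  have hD : ContDiffOn ℝ (⊤ : ℕ∞) (fun q => fderiv ℝ ψ q) W :=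
    hψ.fderiv_of_isOpen hWopen (by simp)
  have hBc : ContDiffOn ℝ (⊤ : ℕ∞) (pds ψ) W := hD.clm_apply contDiffOn_const
  have hψd : DifferentiableAt ℝ ψ p := (hψ.contDiffAt hpW).differentiableAt (by simp)
  have hBd : DifferentiableAt ℝ (pds ψ) p :=
    (hBc.contDiffAt hpW).differentiableAt (by simp)
  set a := ψ p with ha
  set b := pds ψ p with hb
  set c := pds (pds ψ) p with hc
  set d := pds (pdr ψ) p with hd
  have Hψ : HasFDerivAt ψ (fderiv ℝ ψ p) p := hψd.hasFDerivAt
  have HB : HasFDerivAt (pds ψ) (fderiv ℝ (pds ψ) p) p := hBd.hasFDerivAt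
  -- eventual equality from flat2
  have e2 : pds ψ =ᶠ[nhds p] fun q => k₁ * (ψ q * ψ q - q.2 * (ψ q * pds ψ q)) := by
    filter_upwards [hpW] with q hq
    have h := hflat2 q hq
    linear_combination h
  -- eventual equality from flat1
  have e1 : pdr ψ =ᶠ[nhds p] fun q => k₁ * (q.1 * (ψ q * pds ψ q)) := by
    filter_upwards [hpW] with q hq
    have h := hflat1 q hq
    have hq1 : q.1 ≠ 0 := ne_of_gt (hWsub hq)
    field_simp at h
    linear_combination h
  -- value of pdr ψ at p
  have hrp : pdr ψ p = k₁ * (p.1 * (a * b)) := e1.self_of_nhds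
  -- value of pds ψ at p
  have hsp : b = k₁ * (a * a - p.2 * (a * b)) := by
    have h := hflat2 p hp
    linear_combination h
  -- derivative of RHS of flat2
  have H2 : HasFDerivAt (fun q => k₁ * (ψ q * ψ q - q.2 * (ψ q * pds ψ q)))
      (k₁ • ((ψ p • fderiv ℝ ψ p + ψ p • fderiv ℝ ψ p) -
        (p.2 • (ψ p • fderiv ℝ (pds ψ) p + pds ψ p • fderiv ℝ ψ p) +
          (ψ p * pds ψ p) • ContinuousLinearMap.snd ℝ ℝ ℝ))) p :=
    ((Hψ.mul Hψ).sub (hasFDerivAt_snd.mul (Hψ.mul HB))).const_mul k₁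
  have hceq : c = k₁ * ((a * b + a * b) - (p.2 * (a * c + b * b) + a * b)) := by
    have h1 : c = (fderiv ℝ (fun q => k₁ * (ψ q * ψ q - q.2 * (ψ q * pds ψ q))) p) (0, 1) :=
      congrArg (fun L : (ℝ × ℝ) →L[ℝ] ℝ => L (0, 1)) e2.fderiv_eq
    have hb' : (fderiv ℝ ψ p) (0, 1) = b := rfl
    have hc' : (fderiv ℝ (pds ψ) p) (0, 1) = c := rfl
    conv_lhs => rw [h1]
    rw [H2.fderiv]
    simp only [ContinuousLinearMap.smul_apply, ContinuousLinearMap.add_apply,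
      ContinuousLinearMap.sub_apply, ContinuousLinearMap.coe_snd', smul_eq_mul,
      hb', hc']
    ring
  -- derivative of RHS of flat1
  have H1 : HasFDerivAt (fun q => k₁ * (q.1 * (ψ q * pds ψ q)))
      (k₁ • (p.1 • (ψ p • fderiv ℝ (pds ψ) p + pds ψ p • fderiv ℝ ψ p) +
        (ψ p * pds ψ p) • ContinuousLinearMap.fst ℝ ℝ ℝ)) p :=
    (hasFDerivAt_fst.mul (Hψ.mul HB)).const_mul k₁
  have hdeq : d = k₁ * (p.1 * (a * c + b * b)) := by
    have h1 : pds (pdr ψ) p = pds (fun q => k₁ * (q.1 * (ψ q * pds ψ q))) p :=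
      congrArg (fun L : (ℝ × ℝ) →L[ℝ] ℝ => L (0, 1)) e1.fderiv_eq
    have hb' : (fderiv ℝ ψ p) (0, 1) = b := rfl
    have hc' : (fderiv ℝ (pds ψ) p) (0, 1) = c := rfl
    rw [hd, h1]
    show (fderiv ℝ (fun q => k₁ * (q.1 * (ψ q * pds ψ q))) p) (0, 1) = _
    rw [H1.fderiv]
    simp only [ContinuousLinearMap.smul_apply, ContinuousLinearMap.add_apply,
      ContinuousLinearMap.coe_fst', smul_eq_mul, hb', hc']
    ring
  -- numerator of Q vanishes
  have hnum : p.1 * c + p.2 * d - pdr ψ p = 0 := by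
    rw [hrp, hdeq]
    linear_combination p.1 * hceq
  have hQ : QOf ψ p = 0 := by
    unfold QOf
    rw [show p.1 * pds (pds ψ) p + p.2 * pds (pdr ψ) p - pdr ψ p = 0 from hnum]
    simp
  refine ⟨hQ, ?_⟩
  unfold POf
  rw [hQ]
  rw [hrp]
  have hp1 : p.1 ≠ 0 := ne_of_gt hr0
  field_simp
  rw [← ha, ← hb, div_eq_iff ha0]
  linear_combination hsp
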